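/- Let B be the finite Blaschke product with zeros \(a_1,\dots,a_N\in\mathbb D\). A function \(\psi\in H^\infty\) satisfies that \(\psi/B\) is real-valued a.e. on the unit circle if and only if \(\psi(z)=p(z)\prod_{j=1}^N(1-\overline{a_j}z)^{-2}\) for some N-symmetric polynomial p. -/

import Mathlib

open MeasureTheory Complex Filter Topology
open scoped Real ComplexConjugate

noncomputable section

instance : Fact (0 < 2 * π) := ⟨by positivity⟩

/-- Normalized arc length (Haar) measure on the circle `ℝ / 2πℤ`. -/
abbrev μT : Measure (AddCircle (2 * π)) := AddCircle.haarAddCircle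

/-- The boundary point `e^{iθ}` corresponding to `θ ∈ ℝ / 2πℤ`. -/
def bpt (θ : AddCircle (2 * π)) : ℂ := fourier 1 θ

/-- The Hardy space `H¹`, viewed as the subset of `L¹` of the circle consisting of
functions whose negative Fourier coefficients vanish. -/
def HardySet : Set (Lp ℂ 1 μT) :=
  {f | ∀ n : ℤ, n < 0 → fourierCoeff (⇑f) n = 0}

/-- A boundary function is inner if it lies in `H¹` (equivalently `H^∞`) and has
unimodular boundary values a.e. -/
def InnerFn (I : AddCircle (2 * π) → ℂ) : Prop :=
  Integrable I μT ∧ (∀ᵐ θ ∂μT, ‖I θ‖ = 1) ∧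
    ∀ n : ℤ, n < 0 → fourierCoeff I n = 0

/-- A boundary function is outer if it lies in `H¹`, does not vanish at the origin
(i.e. has nonzero mean), `log|F|` is integrable, and `log|F(0)| = ∫ log|F|`. -/
def OuterFn (F : AddCircle (2 * π) → ℂ) : Prop :=
  Integrable F μT ∧ (∀ n : ℤ, n < 0 → fourierCoeff F n = 0) ∧
    fourierCoeff F 0 ≠ 0 ∧
    Integrable (fun θ => Real.log (‖F θ‖)) μT ∧
    Real.log (‖fourierCoeff F 0‖) = ∫ θ, Real.log (‖F θ‖) ∂μT

/-- The punctured Hardy space `H¹_K`: `H¹` functions whose Fourier coefficients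
vanish on the finite set `K`. -/
def HardyKSet (K : Finset ℕ) : Set (Lp ℂ 1 μT) :=
  {f | (∀ n : ℤ, n < 0 → fourierCoeff (⇑f) n = 0) ∧ ∀ k ∈ K, fourierCoeff (⇑f) (k : ℤ) = 0}

def coeffZ (p : Polynomial ℂ) (j : ℤ) : ℂ := if 0 ≤ j then p.coeff j.toNat else 0

def NSymm (N : ℕ) (p : Polynomial ℂ) : Prop :=
  ∀ k : ℤ, coeffZ p ((N : ℤ) - k) = conj (coeffZ p ((N : ℤ) + k))

/-!
Multiplying by `D(z)² = ∏ⱼ (1 - āⱼ z)²` turns the problem into one about the bounded holomorphic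
function `g = ψ D²`. On the unit circle `B D² = zᴺ |D|²`, so `ψ / B` is real exactly where the
boundary values of `g` lie in `ℝ · zᴺ`. Then `e^{-iNθ} g` is real, so the Fourier coefficients of
`g` on the circle satisfy `ĝ(N + k) = conj ĝ(N - k)`. These coefficients are the Taylor
coefficients of `g` (Cauchy's formula on the circles of radius `r < 1`, then dominated convergence
as `r → 1`); they vanish below `0`, hence above `2N`, so `g` is an `N`-symmetric polynomial.
Conversely, an `N`-symmetric polynomial satisfies `z^{2N} conj (p z) = p z` on the circle, and
`p / D²` is continuous up to the boundary, so its radial limits are its values there.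
-/

open Metric Polynomial

lemma norm_bpt (θ : AddCircle (2 * π)) : ‖bpt θ‖ = 1 := Circle.norm_coe _

lemma bpt_coe (x : ℝ) : bpt x = exp (x * I) := by
  rw [bpt, fourier_coe_apply]
  congr 1
  field_simp
  push_cast
  ring

lemma fourier_eq_bpt_zpow (n : ℤ) (θ : AddCircle (2 * π)) : fourier n θ = bpt θ ^ n := by
  rw [bpt, fourier_apply, fourier_apply, AddCircle.toCircle_zsmul, Circle.coe_zpow, one_zsmul]

lemma mul_conj_eq_one {z : ℂ} (hz : ‖z‖ = 1) : z * conj z = 1 := by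
  rw [mul_conj', hz]
  norm_num

section FourierSymmetry

variable {T : ℝ} [Fact (0 < T)]

lemma fourierCoeff_conj (f : AddCircle T → ℂ) (n : ℤ) :
    fourierCoeff (fun θ => conj (f θ)) n = conj (fourierCoeff f (-n)) := by
  simp only [fourierCoeff, ← integral_conj, smul_eq_mul, map_mul, neg_neg, ← fourier_neg]

lemma fourierCoeff_fourier_mul (f : AddCircle T → ℂ) (m n : ℤ) :
    fourierCoeff (fun θ => fourier m θ * f θ) n = fourierCoeff f (n - m) := by
  simp only [fourierCoeff, smul_eq_mul, ← mul_assoc, ← fourier_add]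
  rw [show -(n - m) = -n + m by ring]

lemma fourierCoeff_add_eq_conj_sub {f : AddCircle T → ℂ} {N : ℤ}
    (hf : ∀ᵐ θ ∂AddCircle.haarAddCircle, ∃ s : ℝ, f θ = s * fourier N θ) (k : ℤ) :
    fourierCoeff f (N + k) = conj (fourierCoeff f (N - k)) := by
  set h : AddCircle T → ℂ := fun θ => fourier (-N) θ * f θ
  have hreal : (fun θ => conj (h θ)) =ᵐ[AddCircle.haarAddCircle] h := by
    filter_upwards [hf] with θ ⟨s, hs⟩
    have hh : h θ = s := by
      rw [show h θ = s * (fourier (-N) θ * fourier N θ) by simp only [h, hs]; ring,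
        ← fourier_add, neg_add_cancel, fourier_zero, mul_one]
    rw [hh, conj_ofReal]
  calc fourierCoeff f (N + k) = fourierCoeff h k := by
        rw [fourierCoeff_fourier_mul, sub_neg_eq_add, add_comm]
    _ = fourierCoeff (fun θ => conj (h θ)) k := by rw [fourierCoeff_congr_ae hreal]
    _ = conj (fourierCoeff f (N - k)) := by
        rw [fourierCoeff_conj, fourierCoeff_fourier_mul, sub_neg_eq_add, neg_add_eq_sub]

end FourierSymmetry

lemma circleIntegral_zpow_mul_eq_fourierCoeff (g : ℂ → ℂ) {r : ℝ} (hr : 0 < r) (n : ℤ) :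
    ∮ z in C(0, r), z ^ (-(n + 1)) * g z =
      2 * π * I * (r : ℂ) ^ (-n) * fourierCoeff (fun θ : AddCircle (2 * π) => g (r * bpt θ)) n := by
  rw [fourierCoeff_eq_intervalIntegral _ n 0, zero_add, circleIntegral, Complex.real_smul,
    ← mul_assoc, ← intervalIntegral.integral_const_mul]
  refine intervalIntegral.integral_congr fun x _ => ?_
  have hr' : (r : ℂ) ≠ 0 := by exact_mod_cast hr.ne'
  have he : exp (x * I) ≠ 0 := exp_ne_zero _
  simp only [deriv_circleMap, circleMap, zero_add, smul_eq_mul, fourier_eq_bpt_zpow, bpt_coe]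
  rw [zpow_neg, zpow_neg, zpow_neg, zpow_add₀ (mul_ne_zero hr' he), mul_zpow]
  push_cast
  field_simp

section CircleOfRadius

variable {g : ℂ → ℂ} {r : ℝ}

lemma fourierCoeff_comp_mul_bpt_natCast (hr : 0 < r) (hg : DifferentiableOn ℂ g (closedBall 0 r))
    (n : ℕ) :
    fourierCoeff (fun θ : AddCircle (2 * π) => g (r * bpt θ)) n =
      iteratedDeriv n g 0 / n.factorial * r ^ n := by
  have hcauchy := hg.circleIntegral_one_div_sub_center_pow_smul hr n
  have hintegrand :
      (fun z => (1 / (z - 0) ^ (n + 1)) • g z) = fun z => z ^ (-((n : ℤ) + 1)) * g z := by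
    ext z
    rw [sub_zero, smul_eq_mul, one_div, zpow_neg, ← Nat.cast_succ, zpow_natCast]
  rw [hintegrand, circleIntegral_zpow_mul_eq_fourierCoeff g hr, zpow_neg, zpow_natCast,
    smul_eq_mul] at hcauchy
  have hr' : (r : ℂ) ≠ 0 := by exact_mod_cast hr.ne'
  have hπ : (π : ℂ) ≠ 0 := by exact_mod_cast Real.pi_ne_zero
  field_simp at hcauchy ⊢
  linear_combination hcauchy

lemma fourierCoeff_comp_mul_bpt_of_neg (hr : 0 < r) (hg : DifferentiableOn ℂ g (closedBall 0 r))
    {n : ℤ} (hn : n < 0) :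
    fourierCoeff (fun θ : AddCircle (2 * π) => g (r * bpt θ)) n = 0 := by
  obtain ⟨m, hm⟩ : ∃ m : ℕ, -(n + 1) = m := ⟨(-(n + 1)).toNat, by omega⟩
  have hcauchy : ∮ z in C(0, r), z ^ (-(n + 1)) * g z = 0 := by
    simp_rw [hm, zpow_natCast]
    exact ((differentiable_pow m).differentiableOn.mul hg |>.mono closure_ball_subset_closedBall
      |>.diffContOnCl).circleIntegral_eq_zero hr.le
  rw [circleIntegral_zpow_mul_eq_fourierCoeff g hr] at hcauchy
  have hr' : (r : ℂ) ≠ 0 := by exact_mod_cast hr.ne'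
  simpa [Real.pi_ne_zero, zpow_ne_zero n hr'] using hcauchy

end CircleOfRadius

lemma exists_norm_mul_le_of_continuous {ψ h : ℂ → ℂ} {C : ℝ}
    (hC : ∀ z ∈ ball (0 : ℂ) 1, ‖ψ z‖ ≤ C) (hh : Continuous h) :
    ∃ C', ∀ z ∈ ball (0 : ℂ) 1, ‖ψ z * h z‖ ≤ C' := by
  obtain ⟨M, hM⟩ := (isCompact_closedBall (0 : ℂ) 1).exists_bound_of_continuousOn hh.continuousOn
  have hC0 : 0 ≤ C := (norm_nonneg _).trans (hC 0 (mem_ball_self one_pos))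
  refine ⟨C * M, fun z hz => ?_⟩
  rw [norm_mul]
  exact mul_le_mul (hC z hz) (hM z (ball_subset_closedBall hz)) (norm_nonneg _) hC0

def HasRadialLimit (g : ℂ → ℂ) (gb : AddCircle (2 * π) → ℂ) : Prop :=
  ∀ᵐ θ ∂μT, Tendsto (fun r : ℝ => g (r * bpt θ)) (𝓝[<] 1) (𝓝 (gb θ))

lemma ofReal_mul_mem_ball {r : ℝ} (hr : r ∈ Set.Ioo 0 1) {z : ℂ} (hz : ‖z‖ = 1) :
    (r : ℂ) * z ∈ ball (0 : ℂ) 1 := by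
  rw [mem_ball_zero_iff, norm_mul, hz, mul_one, norm_real, Real.norm_of_nonneg hr.1.le]
  exact hr.2

lemma tendsto_radial_of_continuousAt {g h : ℂ → ℂ} (hgh : Set.EqOn g h (ball 0 1)) {z : ℂ}
    (hz : ‖z‖ = 1) (hh : ContinuousAt h z) :
    Tendsto (fun r : ℝ => g (r * z)) (𝓝[<] 1) (𝓝 (h z)) := by
  have hray : Tendsto (fun r : ℝ => (r : ℂ) * z) (𝓝[<] 1) (𝓝 z) :=
    ((by fun_prop : Continuous fun r : ℝ => (r : ℂ) * z).tendsto' 1 z (by simp)).mono_left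
      nhdsWithin_le_nhds
  refine (hh.tendsto.comp hray).congr' ?_
  filter_upwards [Ioo_mem_nhdsLT zero_lt_one] with r hr
  exact (hgh (ofReal_mul_mem_ball hr hz)).symm

namespace HasRadialLimit

variable {g : ℂ → ℂ} {gb : AddCircle (2 * π) → ℂ}

lemma mul_continuous (hg : HasRadialLimit g gb) {h : ℂ → ℂ} (hh : Continuous h) :
    HasRadialLimit (fun z => g z * h z) (fun θ => gb θ * h (bpt θ)) := by
  filter_upwards [hg] with θ hθ
  exact hθ.mul (tendsto_radial_of_continuousAt (Set.eqOn_refl h _) (norm_bpt θ) hh.continuousAt)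

lemma ae_eq_of_eqOn (hg : HasRadialLimit g gb) {h : ℂ → ℂ} (hgh : Set.EqOn g h (ball 0 1))
    (hh : ∀ z : ℂ, ‖z‖ = 1 → ContinuousAt h z) : gb =ᵐ[μT] fun θ => h (bpt θ) := by
  filter_upwards [hg] with θ hθ
  exact tendsto_nhds_unique hθ
    (tendsto_radial_of_continuousAt hgh (norm_bpt θ) (hh _ (norm_bpt θ)))

lemma tendsto_fourierCoeff (hg : HasRadialLimit g gb) (hd : DifferentiableOn ℂ g (ball 0 1))
    {C : ℝ} (hC : ∀ z ∈ ball (0 : ℂ) 1, ‖g z‖ ≤ C) (n : ℤ) :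
    Tendsto (fun r : ℝ => fourierCoeff (fun θ : AddCircle (2 * π) => g (r * bpt θ)) n)
      (𝓝[<] 1) (𝓝 (fourierCoeff gb n)) := by
  have hmem : ∀ᶠ r : ℝ in 𝓝[<] 1, ∀ θ : AddCircle (2 * π), (r : ℂ) * bpt θ ∈ ball (0 : ℂ) 1 := by
    filter_upwards [Ioo_mem_nhdsLT zero_lt_one] with r hr θ
    exact ofReal_mul_mem_ball hr (norm_bpt θ)
  refine tendsto_integral_filter_of_dominated_convergence (fun _ => C) ?_ ?_
    (integrable_const C) ?_
  · filter_upwards [hmem] with r hr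
    exact ((fourier (-n)).continuous.smul (hd.continuousOn.comp_continuous
      (continuous_const.mul (fourier 1).continuous) hr)).aestronglyMeasurable
  · filter_upwards [hmem] with r hr
    refine .of_forall fun θ => ?_
    rw [norm_smul, fourier_apply, Circle.norm_coe, one_mul]
    exact hC _ (hr θ)
  · filter_upwards [hg] with θ hθ
    exact hθ.const_smul _

lemma fourierCoeff_natCast (hg : HasRadialLimit g gb) (hd : DifferentiableOn ℂ g (ball 0 1))
    {C : ℝ} (hC : ∀ z ∈ ball (0 : ℂ) 1, ‖g z‖ ≤ C) (n : ℕ) :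
    fourierCoeff gb n = iteratedDeriv n g 0 / n.factorial := by
  refine tendsto_nhds_unique (hg.tendsto_fourierCoeff hd hC n) ?_
  have hpow : Tendsto (fun r : ℝ => iteratedDeriv n g 0 / n.factorial * (r : ℂ) ^ n) (𝓝[<] 1)
      (𝓝 (iteratedDeriv n g 0 / n.factorial)) :=
    ((by fun_prop : Continuous fun r : ℝ => iteratedDeriv n g 0 / n.factorial * (r : ℂ) ^ n
      ).tendsto' 1 _ (by simp)).mono_left nhdsWithin_le_nhds
  refine hpow.congr' ?_
  filter_upwards [Ioo_mem_nhdsLT zero_lt_one] with r hr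
  exact (fourierCoeff_comp_mul_bpt_natCast hr.1
    (hd.mono (closedBall_subset_ball hr.2)) n).symm

lemma fourierCoeff_of_neg (hg : HasRadialLimit g gb) (hd : DifferentiableOn ℂ g (ball 0 1))
    {C : ℝ} (hC : ∀ z ∈ ball (0 : ℂ) 1, ‖g z‖ ≤ C) {n : ℤ} (hn : n < 0) :
    fourierCoeff gb n = 0 := by
  refine tendsto_nhds_unique (hg.tendsto_fourierCoeff hd hC n) (tendsto_const_nhds.congr' ?_)
  filter_upwards [Ioo_mem_nhdsLT zero_lt_one] with r hr
  exact (fourierCoeff_comp_mul_bpt_of_neg hr.1 (hd.mono (closedBall_subset_ball hr.2)) hn).symm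

end HasRadialLimit

lemma Polynomial.exists_coeff_eq {R : Type*} [Semiring R] (c : ℕ → R) {d : ℕ}
    (hc : ∀ m, d < m → c m = 0) : ∃ p : R[X], ∀ m, p.coeff m = c m := by
  refine ⟨∑ m ∈ Finset.range (d + 1), monomial m (c m), fun m => ?_⟩
  rw [finsetSum_coeff, Finset.sum_eq_single m (fun k _ hk => coeff_monomial_of_ne _ hk.symm)]
  · rw [coeff_monomial_same]
  · intro hm
    rw [coeff_monomial_same, hc m (by simpa using hm)]

lemma exists_polynomial_eqOn_ball {g : ℂ → ℂ} {R : ℝ} (hg : DifferentiableOn ℂ g (ball 0 R))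
    {d : ℕ} (hd : ∀ m, d < m → iteratedDeriv m g 0 = 0) :
    ∃ p : ℂ[X], (∀ m, p.coeff m = iteratedDeriv m g 0 / m.factorial) ∧
      Set.EqOn g p.eval (ball 0 R) := by
  obtain ⟨p, hp⟩ := exists_coeff_eq (fun m => iteratedDeriv m g 0 / m.factorial)
    (d := d) fun m hm => by simp [hd m hm]
  refine ⟨p, hp, fun z hz => ?_⟩
  have hdeg : p.natDegree < d + 1 := by
    refine Nat.lt_succ_of_le (natDegree_le_iff_coeff_eq_zero.mpr fun m hm => ?_)
    simp [hp, hd m (mod_cast hm)]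
  have hpoly : HasSum (fun m => p.coeff m * z ^ m) (p.eval z) := by
    rw [eval_eq_sum_range' hdeg]
    exact hasSum_sum_of_ne_finset_zero fun m hm => by
      rw [hp, hd m (by simpa using hm), zero_div, zero_mul]
  refine (Complex.hasSum_taylorSeries_on_ball hg hz).unique (hpoly.congr_fun fun m => ?_)
  rw [hp, sub_zero, smul_eq_mul, smul_eq_mul]
  ring

namespace NSymm

variable {N : ℕ} {p : ℂ[X]}

lemma coeff_eq_conj (h : NSymm N p) {m : ℕ} (hm : m ≤ 2 * N) :
    p.coeff m = conj (p.coeff (2 * N - m)) := by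
  have hk := h (N - m)
  rw [sub_sub_cancel, show (N : ℤ) + (N - m) = ((2 * N - m : ℕ) : ℤ) by omega] at hk
  simpa [coeffZ] using hk

lemma coeff_eq_zero (h : NSymm N p) {m : ℕ} (hm : 2 * N < m) : p.coeff m = 0 := by
  have hk := h (m - N)
  rw [add_sub_cancel, coeffZ, if_neg (by omega), coeffZ, if_pos (by omega)] at hk
  simpa using hk.symm

lemma natDegree_le (h : NSymm N p) : p.natDegree ≤ 2 * N :=
  natDegree_le_iff_coeff_eq_zero.mpr fun _ hm => h.coeff_eq_zero (mod_cast hm)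

lemma pow_mul_conj_eval (h : NSymm N p) {z : ℂ} (hz : z * conj z = 1) :
    z ^ (2 * N) * conj (p.eval z) = p.eval z := by
  rw [eval_eq_sum_range' (Nat.lt_succ_of_le h.natDegree_le), map_sum, Finset.mul_sum]
  conv_rhs => rw [← Finset.sum_range_reflect]
  refine Finset.sum_congr rfl fun i hi => ?_
  have hi : i ≤ 2 * N := Nat.lt_succ_iff.mp (Finset.mem_range.mp hi)
  have hc : p.coeff (2 * N - i) = conj (p.coeff i) := by
    rw [h.coeff_eq_conj (Nat.sub_le _ _), Nat.sub_sub_self hi]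
  have hpow : z ^ (2 * N) = z ^ (2 * N - i) * z ^ i := by rw [← pow_add, Nat.sub_add_cancel hi]
  have hzi : (z * conj z) ^ i = 1 := by rw [hz, one_pow]
  rw [show 2 * N + 1 - 1 - i = 2 * N - i by omega, hc, hpow, map_mul, map_pow]
  linear_combination conj (p.coeff i) * z ^ (2 * N - i) * hzi

lemma exists_eval_eq_ofReal_mul_pow (h : NSymm N p) {z : ℂ} (hz : ‖z‖ = 1) :
    ∃ s : ℝ, p.eval z = s * z ^ N := by
  have hz1 := mul_conj_eq_one hz
  have hzN : z ^ N * conj z ^ N = 1 := by rw [← mul_pow, hz1, one_pow]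
  set w := p.eval z * conj z ^ N
  have hreal : conj w = w := by
    have := h.pow_mul_conj_eval hz1
    simp only [w, map_mul, map_pow, conj_conj]
    linear_combination conj z ^ N * this - (conj (p.eval z) * z ^ N) * hzN
  refine ⟨w.re, ?_⟩
  rw [conj_eq_iff_re.mp hreal]
  linear_combination -(p.eval z) * hzN

end NSymm

theorem HasRadialLimit.exists_nSymm_eqOn_ball {g : ℂ → ℂ} {gb : AddCircle (2 * π) → ℂ}
    (hg : HasRadialLimit g gb) (hd : DifferentiableOn ℂ g (ball 0 1)) {C : ℝ}
    (hC : ∀ z ∈ ball (0 : ℂ) 1, ‖g z‖ ≤ C) {N : ℕ}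
    (hreal : ∀ᵐ θ ∂μT, ∃ s : ℝ, gb θ = s * bpt θ ^ N) :
    ∃ p : ℂ[X], NSymm N p ∧ Set.EqOn g p.eval (ball 0 1) := by
  have hsymm : ∀ k : ℤ, fourierCoeff gb (N + k) = conj (fourierCoeff gb (N - k)) :=
    fourierCoeff_add_eq_conj_sub <| hreal.mono fun θ ⟨s, hs⟩ =>
      ⟨s, by rw [hs, fourier_eq_bpt_zpow, zpow_natCast]⟩
  have hvanish : ∀ m : ℕ, 2 * N < m → iteratedDeriv m g 0 = 0 := by
    intro m hm
    -- the coefficient of index `m > 2N` mirrors the one of negative index `2N - m`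
    have hk := hsymm (m - N)
    rw [add_sub_cancel, hg.fourierCoeff_natCast hd hC,
      hg.fourierCoeff_of_neg hd hC (by omega), map_zero] at hk
    simpa [Nat.factorial_ne_zero] using hk
  obtain ⟨p, hp, hgp⟩ := exists_polynomial_eqOn_ball hd hvanish
  have hcoeffZ : ∀ j : ℤ, coeffZ p j = fourierCoeff gb j := by
    intro j
    rcases lt_or_ge j 0 with hj | hj
    · rw [coeffZ, if_neg hj.not_ge, hg.fourierCoeff_of_neg hd hC hj]
    · lift j to ℕ using hj
      rw [coeffZ, if_pos (Int.natCast_nonneg j), Int.toNat_natCast, hp,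
        hg.fourierCoeff_natCast hd hC]
  refine ⟨p, fun k => ?_, hgp⟩
  rw [hcoeffZ, hcoeffZ, sub_eq_add_neg, hsymm, sub_neg_eq_add]

lemma blaschke_mul_sq {N : ℕ} (a : Fin N → ℂ) {z : ℂ} (hz : z * conj z = 1) :
    (∏ j, (z - a j) / (1 - conj (a j) * z)) * (∏ j, (1 - conj (a j) * z)) ^ 2 =
      z ^ N * normSq (∏ j, (1 - conj (a j) * z)) := by
  have hfactor : ∀ j, (z - a j) / (1 - conj (a j) * z) * (1 - conj (a j) * z) ^ 2 =
      z * normSq (1 - conj (a j) * z) := by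
    intro j
    -- on the circle `z - a = z * conj (1 - conj a * z)`
    rw [← mul_conj]
    rcases eq_or_ne (1 - conj (a j) * z) 0 with h0 | h0
    · simp [h0]
    · field_simp
      simp only [map_sub, map_one, map_mul, conj_conj]
      linear_combination (a j) * (1 - conj (a j) * z) * hz
  simp only [← Finset.prod_pow, ← Finset.prod_mul_distrib, hfactor, map_prod, ofReal_prod]
  rw [Finset.prod_mul_distrib, Finset.prod_const, Finset.card_univ, Fintype.card_fin]

lemma exists_ofReal_mul_iff_of_mul_sq_eq {b d u w : ℂ} (hd : d ≠ 0)
    (h : b * d ^ 2 = u * normSq d) :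
    (∃ t : ℝ, w = t * b) ↔ ∃ s : ℝ, w * d ^ 2 = s * u := by
  have hn : (normSq d : ℂ) ≠ 0 := by exact_mod_cast normSq_pos.mpr hd |>.ne'
  constructor
  · rintro ⟨t, rfl⟩
    exact ⟨t * normSq d, by push_cast; linear_combination t * h⟩
  · rintro ⟨s, hs⟩
    refine ⟨s / normSq d, mul_right_cancel₀ (pow_ne_zero 2 hd) ?_⟩
    rw [hs, mul_assoc, h]
    push_cast
    field_simp

lemma one_sub_conj_mul_ne_zero {a z : ℂ} (ha : ‖a‖ < 1) (hz : ‖z‖ ≤ 1) : 1 - conj a * z ≠ 0 := by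
  intro h
  have hlt : ‖conj a * z‖ < 1 := by
    rw [norm_mul, norm_conj]
    exact mul_lt_one_of_nonneg_of_lt_one_left (norm_nonneg a) ha hz
  rw [← sub_eq_zero.mp h, norm_one] at hlt
  exact lt_irrefl _ hlt

lemma prod_one_sub_conj_mul_ne_zero {N : ℕ} {a : Fin N → ℂ} (ha : ∀ j, ‖a j‖ < 1) {z : ℂ}
    (hz : ‖z‖ ≤ 1) : ∏ j, (1 - conj (a j) * z) ≠ 0 :=
  Finset.prod_ne_zero_iff.mpr fun j _ => one_sub_conj_mul_ne_zero (ha j) hz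

lemma exists_ofReal_mul_blaschke_iff {N : ℕ} {a : Fin N → ℂ} (ha : ∀ j, ‖a j‖ < 1) {z w : ℂ}
    (hz : ‖z‖ = 1) :
    (∃ t : ℝ, w = t * ∏ j, (z - a j) / (1 - conj (a j) * z)) ↔
      ∃ s : ℝ, w * (∏ j, (1 - conj (a j) * z)) ^ 2 = s * z ^ N :=
  exists_ofReal_mul_iff_of_mul_sq_eq (prod_one_sub_conj_mul_ne_zero ha hz.le)
    (blaschke_mul_sq a (mul_conj_eq_one hz))

/-- Let `B` be the finite Blaschke product with zeros `a₁,…,a_N ∈ 𝔻`. A bounded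
holomorphic function `ψ` on the disk (with boundary values `ψb`) has `ψ/B`
real-valued a.e. on the circle iff `ψ(z) = p(z) ∏ (1-\bar a_j z)^{-2}` for some
`N`-symmetric polynomial `p`. -/
theorem hinfty_real_quotient_iff (N : ℕ) (a : Fin N → ℂ)
    (ha : ∀ j, ‖a j‖ < 1)
    (ψ : ℂ → ℂ) (hd : DifferentiableOn ℂ ψ (Metric.ball 0 1))
    (hb : ∃ Cb : ℝ, ∀ z ∈ Metric.ball (0 : ℂ) 1, ‖ψ z‖ ≤ Cb)
    (ψb : AddCircle (2 * π) → ℂ)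
    (hψb : ∀ᵐ θ ∂μT, Tendsto (fun r : ℝ => ψ ((r : ℂ) * bpt θ)) (𝓝[<] 1) (𝓝 (ψb θ))) :
    (∀ᵐ θ ∂μT, ∃ t : ℝ,
        ψb θ = (t : ℂ) * ∏ j, (bpt θ - a j) / (1 - conj (a j) * bpt θ)) ↔
      ∃ p : Polynomial ℂ, NSymm N p ∧
        ∀ z ∈ Metric.ball (0 : ℂ) 1, ψ z = p.eval z * ∏ j, ((1 - conj (a j) * z) ^ 2)⁻¹ := by
  obtain ⟨C, hC⟩ := hb
  have hψb' : HasRadialLimit ψ ψb := hψb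
  set D : ℂ → ℂ := fun z => ∏ j, (1 - conj (a j) * z)
  have hD : Differentiable ℂ D := by fun_prop
  have hD0 : ∀ z : ℂ, ‖z‖ ≤ 1 → D z ^ 2 ≠ 0 := fun z hz =>
    pow_ne_zero 2 (prod_one_sub_conj_mul_ne_zero ha hz)
  have hprod : ∀ z, ∏ j, ((1 - conj (a j) * z) ^ 2)⁻¹ = (D z ^ 2)⁻¹ := by
    simp [D, Finset.prod_inv_distrib, Finset.prod_pow]
  simp only [exists_ofReal_mul_blaschke_iff ha (norm_bpt _), hprod]
  constructor
  · intro hreal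
    obtain ⟨C', hC'⟩ := exists_norm_mul_le_of_continuous hC (hD.continuous.pow 2)
    obtain ⟨p, hp, hgp⟩ := (hψb'.mul_continuous (hD.continuous.pow 2)).exists_nSymm_eqOn_ball
      (hd.mul (hD.pow 2).differentiableOn) hC' hreal
    exact ⟨p, hp, fun z hz =>
      (eq_mul_inv_iff_mul_eq₀ (hD0 z (mem_ball_zero_iff.mp hz).le)).mpr (hgp hz)⟩
  · rintro ⟨p, hp, hψ⟩
    have hbdry := hψb'.ae_eq_of_eqOn hψ fun z hz =>
      p.continuous.continuousAt.mul ((hD.continuous.continuousAt.pow 2).inv₀ (hD0 z hz.le))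
    filter_upwards [hbdry] with θ hθ
    obtain ⟨s, hs⟩ := hp.exists_eval_eq_ofReal_mul_pow (norm_bpt θ)
    exact ⟨s, by rw [hθ, inv_mul_cancel_right₀ (hD0 _ (norm_bpt θ).le), hs]⟩
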